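/- Let A be a unital algebra over ℂ, q ∈ (-1,1) a real scalar, s ∈ ℂ, and R, c, Q ∈ A satisfying: R·c = s·Q + c·R, Q·c = q·(c·Q), and R·Q = q·(Q·R). Then for all integers m, n ≥ 1 one has R^m · c^n = ∑_{k=0}^{min(m,n)} (n choose k)_q · ([m]_q!/[m-k]_q!) · s^k · (c^{n-k} · Q^k · R^{m-k}). -/

import Mathlib

/-- The `q`-number `[n]_q = ∑_{j=0}^{n-1} q^j`. -/
def qNum (q : ℝ) (n : ℕ) : ℝ := ∑ j ∈ Finset.range n, q ^ j

/-- The `q`-factorial `[n]_q! = ∏_{j=1}^n [j]_q`. -/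
def qFact (q : ℝ) (n : ℕ) : ℝ := ∏ j ∈ Finset.range n, qNum q (j + 1)

/-- The Gaussian binomial coefficient `(n choose k)_q = [n]_q!/([k]_q!·[n-k]_q!)`. -/
noncomputable def qBinom (q : ℝ) (n k : ℕ) : ℝ := qFact q n / (qFact q k * qFact q (n - k))

/-!
Commuting `R` once past `c ^ a * Q ^ j * R ^ b` produces two normally ordered words: one with a
`c` traded for a `Q` (weight `[a]_q s`) and one with an extra `R` (weight `q ^ j`). Hence the
coefficients of `R ^ m * c ^ n` in the normally ordered words `c ^ (n - k) * Q ^ k * R ^ (m - k)`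
obey a `q`-Pascal recursion in `m`, whose solution is `[n]_k [m]_k / [k]_q!` with the falling
`q`-factorials `[n]_k = [n]_q [n - 1]_q ⋯ [n - k + 1]_q`. Written as a product, `[n]_k` vanishes
for `k > n`, so the sum can run over `k ≤ m` and be cut down to `k ≤ min m n` only at the end.
-/

open Finset

lemma qNum_zero (q : ℝ) : qNum q 0 = 0 := by simp [qNum]

lemma qNum_succ (q : ℝ) (n : ℕ) : qNum q (n + 1) = qNum q n + q ^ n := sum_range_succ _ _

lemma qNum_add (q : ℝ) (a b : ℕ) : qNum q (a + b) = qNum q a + q ^ a * qNum q b := by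
  simp only [qNum, sum_range_add, pow_add, mul_sum]

lemma qNum_pos {q : ℝ} (hq : -1 < q) {n : ℕ} (hn : n ≠ 0) : 0 < qNum q n :=
  geom_sum_pos' (by linarith) hn

lemma qFact_succ (q : ℝ) (n : ℕ) : qFact q (n + 1) = qFact q n * qNum q (n + 1) :=
  prod_range_succ _ _

lemma qFact_pos {q : ℝ} (hq : -1 < q) (n : ℕ) : 0 < qFact q n :=
  prod_pos fun j _ => qNum_pos hq j.succ_ne_zero

def qFalling (q : ℝ) (n k : ℕ) : ℝ := ∏ i ∈ range k, qNum q (n - i)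

lemma qFalling_zero (q : ℝ) (n : ℕ) : qFalling q n 0 = 1 := prod_range_zero _

lemma qFalling_succ (q : ℝ) (n k : ℕ) : qFalling q n (k + 1) = qFalling q n k * qNum q (n - k) :=
  prod_range_succ _ _

lemma qFalling_succ_succ (q : ℝ) (n k : ℕ) :
    qFalling q (n + 1) (k + 1) = qNum q (n + 1) * qFalling q n k := by
  rw [qFalling, prod_range_succ', mul_comm]
  simp only [Nat.sub_zero, Nat.add_sub_add_right, qFalling]

lemma qFalling_eq_zero_of_lt (q : ℝ) {n k : ℕ} (h : n < k) : qFalling q n k = 0 :=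
  prod_eq_zero (mem_range.mpr h) (by rw [Nat.sub_self, qNum_zero])

lemma qFact_sub_mul_qFalling (q : ℝ) {n k : ℕ} (h : k ≤ n) :
    qFact q (n - k) * qFalling q n k = qFact q n := by
  induction k with
  | zero => rw [qFalling_zero, Nat.sub_zero, mul_one]
  | succ k ih =>
    have hsucc : n - k = n - (k + 1) + 1 := by omega
    rw [← ih (by omega), qFalling_succ, hsucc, qFact_succ, ← hsucc]
    ring

noncomputable def normalOrderCoeff (q : ℝ) (m n k : ℕ) : ℝ :=
  qFalling q m k * qFalling q n k / qFact q k

lemma normalOrderCoeff_zero (q : ℝ) (m n : ℕ) : normalOrderCoeff q m n 0 = 1 := by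
  simp [normalOrderCoeff, qFalling_zero, qFact]

lemma normalOrderCoeff_of_lt_left (q : ℝ) {m n k : ℕ} (h : m < k) :
    normalOrderCoeff q m n k = 0 := by
  simp [normalOrderCoeff, qFalling_eq_zero_of_lt q h]

lemma normalOrderCoeff_of_lt_right (q : ℝ) {m n k : ℕ} (h : n < k) :
    normalOrderCoeff q m n k = 0 := by
  simp [normalOrderCoeff, qFalling_eq_zero_of_lt q h]

lemma normalOrderCoeff_succ_succ {q : ℝ} (hq : -1 < q) (m n k : ℕ) :
    normalOrderCoeff q (m + 1) n (k + 1)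
      = q ^ (k + 1) * normalOrderCoeff q m n (k + 1) + qNum q (n - k) * normalOrderCoeff q m n k := by
  have hNum := (qNum_pos hq k.succ_ne_zero).ne'
  have hFact := (qFact_pos hq k).ne'
  unfold normalOrderCoeff
  rw [qFalling_succ_succ, qFalling_succ q n, qFalling_succ q m, qFact_succ]
  rcases le_or_gt k m with hkm | hmk
  · obtain ⟨p, rfl⟩ := Nat.exists_eq_add_of_le hkm
    rw [show k + p + 1 = k + 1 + p by omega, qNum_add, Nat.add_sub_cancel_left]
    field_simp
    ring
  · simp [qFalling_eq_zero_of_lt q hmk]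

lemma normalOrderCoeff_eq {q : ℝ} (hq : -1 < q) {m n k : ℕ} (hkm : k ≤ m) (hkn : k ≤ n) :
    normalOrderCoeff q m n k = qBinom q n k * (qFact q m / qFact q (m - k)) := by
  have hm := (qFact_pos hq (m - k)).ne'
  have hn := (qFact_pos hq (n - k)).ne'
  have hk := (qFact_pos hq k).ne'
  rw [normalOrderCoeff, qBinom, ← qFact_sub_mul_qFalling q hkm, ← qFact_sub_mul_qFalling q hkn]
  field_simp

lemma sum_range_succ_eq_sum_shift {M : Type*} [AddCommMonoid M] (f : ℕ → M) {n : ℕ}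
    (h : f (n + 1) = 0) : ∑ k ∈ range (n + 1), f k = ∑ k ∈ range (n + 1), f (k + 1) + f 0 := by
  rw [← sum_range_succ', sum_range_succ _ (n + 1), h, add_zero]

lemma mul_pow_eq_smul_pow_mul {K B : Type*} [CommSemiring K] [Semiring B] [Algebra K B]
    {t : K} {a b : B} (h : a * b = t • (b * a)) (j : ℕ) :
    a * b ^ j = t ^ j • (b ^ j * a) := by
  induction j with
  | zero => simp
  | succ j ih =>
    rw [pow_succ, ← mul_assoc, ih, smul_mul_assoc, mul_assoc, h, mul_smul_comm, smul_smul,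
      ← mul_assoc, ← pow_succ, ← pow_succ]

section NormalOrder

variable {A : Type*} [Ring A] [Algebra ℂ A]

/-- At `j = 0` the truncated `j - 1` is harmless: the coefficient `[0]_q` vanishes. -/
lemma mul_pow_eq_smul_add {q : ℝ} {s : ℂ} {R c Q : A} (h1 : R * c = s • Q + c * R)
    (h2 : Q * c = (q : ℂ) • (c * Q)) (j : ℕ) :
    R * c ^ j = ((qNum q j : ℂ) * s) • (c ^ (j - 1) * Q) + c ^ j * R := by
  induction j with
  | zero => simp [qNum_zero]
  | succ j ih =>
    rcases j with _ | j
    · simpa [qNum] using h1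
    · rw [Nat.add_sub_cancel] at ih
      rw [Nat.add_sub_cancel, pow_succ', ← mul_assoc, h1, add_mul, smul_mul_assoc, mul_assoc,
        mul_pow_eq_smul_pow_mul h2, mul_assoc, ih, mul_add, mul_smul_comm, smul_smul, ← mul_assoc,
        ← pow_succ', ← mul_assoc, ← pow_succ', ← add_assoc, ← add_smul, qNum_succ q (j + 1)]
      congr 2
      push_cast
      ring

lemma mul_normalWord_eq {q : ℝ} {s : ℂ} {R c Q : A} (h1 : R * c = s • Q + c * R)
    (h2 : Q * c = (q : ℂ) • (c * Q)) (h3 : R * Q = (q : ℂ) • (Q * R)) (a j b : ℕ) :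
    R * (c ^ a * Q ^ j * R ^ b)
      = ((qNum q a : ℂ) * s) • (c ^ (a - 1) * Q ^ (j + 1) * R ^ b)
        + ((q : ℂ) ^ j) • (c ^ a * Q ^ j * R ^ (b + 1)) := by
  rw [mul_assoc, ← mul_assoc R, mul_pow_eq_smul_add h1 h2, add_mul, smul_mul_assoc, mul_assoc,
    ← mul_assoc Q, ← pow_succ', ← mul_assoc (c ^ (a - 1)), mul_assoc (c ^ a), ← mul_assoc R,
    mul_pow_eq_smul_pow_mul h3, smul_mul_assoc, mul_assoc (Q ^ j), ← pow_succ', mul_smul_comm,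
    ← mul_assoc (c ^ a)]

lemma mul_sum_normalOrderCoeff {q : ℝ} (hq : -1 < q) {s : ℂ} {R c Q : A}
    (h1 : R * c = s • Q + c * R) (h2 : Q * c = (q : ℂ) • (c * Q))
    (h3 : R * Q = (q : ℂ) • (Q * R)) (m n : ℕ) :
    R * ∑ k ∈ range (m + 1),
        ((normalOrderCoeff q m n k : ℂ) * s ^ k) • (c ^ (n - k) * Q ^ k * R ^ (m - k))
      = ∑ k ∈ range (m + 1 + 1),
        ((normalOrderCoeff q (m + 1) n k : ℂ) * s ^ k) • (c ^ (n - k) * Q ^ k * R ^ (m + 1 - k)) := by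
  set word : ℕ → A := fun k => c ^ (n - k) * Q ^ k * R ^ (m + 1 - k)
  set passed : ℕ → A := fun k => ((q ^ k * normalOrderCoeff q m n k : ℝ) * s ^ k : ℂ) • word k
  have hR : ∀ k ∈ range (m + 1),
      R * (((normalOrderCoeff q m n k : ℂ) * s ^ k) • (c ^ (n - k) * Q ^ k * R ^ (m - k)))
        = ((qNum q (n - k) * normalOrderCoeff q m n k : ℝ) * s ^ (k + 1) : ℂ) • word (k + 1)
          + passed k := by
    intro k hk
    have hkm : m + 1 - k = m - k + 1 := by have := mem_range.mp hk; omega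
    rw [mul_smul_comm, mul_normalWord_eq h1 h2 h3, smul_add, smul_smul, smul_smul]
    simp only [word, passed, Nat.sub_sub, Nat.add_sub_add_right, hkm]
    congr 2 <;> push_cast <;> ring
  have hpassed : passed (m + 1) = 0 := by
    simp [passed, normalOrderCoeff_of_lt_left q (Nat.lt_succ_self m)]
  rw [mul_sum, sum_congr rfl hR, sum_add_distrib, sum_range_succ_eq_sum_shift passed hpassed,
    ← add_assoc, ← sum_add_distrib, sum_range_succ' _ (m + 1)]
  congr 1
  · refine sum_congr rfl fun k _ => ?_
    rw [← add_smul, normalOrderCoeff_succ_succ hq]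
    congr 1
    push_cast
    ring
  · simp [passed, word, normalOrderCoeff_zero]

theorem pow_mul_pow_eq_sum_normalOrderCoeff {q : ℝ} (hq : -1 < q) {s : ℂ} {R c Q : A}
    (h1 : R * c = s • Q + c * R) (h2 : Q * c = (q : ℂ) • (c * Q))
    (h3 : R * Q = (q : ℂ) • (Q * R)) (m n : ℕ) :
    R ^ m * c ^ n = ∑ k ∈ range (m + 1),
      ((normalOrderCoeff q m n k : ℂ) * s ^ k) • (c ^ (n - k) * Q ^ k * R ^ (m - k)) := by
  induction m with
  | zero => simp [normalOrderCoeff_zero]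
  | succ m ih => rw [pow_succ', mul_assoc, ih, mul_sum_normalOrderCoeff hq h1 h2 h3]

end NormalOrder

/-- Abstract form of Lemma 3.10 of the paper: if `R·c = s·Q + c·R`, `Q·c = q·(c·Q)` and
`R·Q = q·(Q·R)`, then
`R^m c^n = ∑_{k=0}^{min(m,n)} (n choose k)_q ([m]_q!/[m-k]_q!) s^k c^{n-k} Q^k R^{m-k}`. -/
theorem stmt4 (A : Type*) [Ring A] [Algebra ℂ A]
    (q : ℝ) (hq : q ∈ Set.Ioo (-1 : ℝ) 1) (s : ℂ) (R c Q : A)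
    (h1 : R * c = s • Q + c * R)
    (h2 : Q * c = (q : ℂ) • (c * Q))
    (h3 : R * Q = (q : ℂ) • (Q * R)) :
    ∀ m n : ℕ, 1 ≤ m → 1 ≤ n →
      R ^ m * c ^ n
        = ∑ k ∈ Finset.range (min m n + 1),
            (((qBinom q n k * (qFact q m / qFact q (m - k)) : ℝ) : ℂ) * s ^ k) •
              (c ^ (n - k) * Q ^ k * R ^ (m - k)) := by
  intro m n _ _
  rw [pow_mul_pow_eq_sum_normalOrderCoeff hq.1 h1 h2 h3 m n,
    ← sum_subset (range_subset_range.mpr (Nat.succ_le_succ (min_le_left m n)))]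
  · refine sum_congr rfl fun k hk => ?_
    have hk : k ≤ min m n := Nat.lt_succ_iff.mp (mem_range.mp hk)
    rw [normalOrderCoeff_eq hq.1 (hk.trans (min_le_left m n)) (hk.trans (min_le_right m n))]
  · intro k hkm hk
    have hnk : n < k := by simp only [mem_range] at hkm hk; omega
    rw [normalOrderCoeff_of_lt_right q hnk, Complex.ofReal_zero, zero_mul, zero_smul]
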